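/- Let X be an infinite-dimensional real Banach space and let (A_n) be an approximation scheme in X such that A_n + A_n ⊆ A_{c·n} for all n ≥ 1, for some integer c ≥ 2. The following are equivalent: (a) (X,(A_n)) satisfies Shapiro's Theorem; (b) for every r > 0 there exists x ∈ X such that sup_{n≥1} n^r · E(x, A_n) = ∞; (c) for some r > 0 there exists x ∈ X such that sup_{n≥1} n^r · E(x, A_n) = ∞; (d) for every r > 0 the set A_∞^r = { x ∈ X : sup_{n≥0} (n+1)^r · E(x, A_n) < ∞ } is a proper subset of X; (e) for some r > 0 the set A_∞^r is a proper subset of X. -/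

import Mathlib

/-!
If Shapiro's theorem fails for some `ε`, every `x` satisfies `E(x, A n) ≤ M_x ε n`, and Baire's
theorem makes this bound uniform on a closed ball. Since each `A n` is a cone and
`A n + A n ⊆ A (c n)`, a bound on a ball becomes a bound `E(y, A (c n)) ≤ L ε n ‖y‖` on the whole
space; applied to `y = x - a` with `a ∈ A n` it gives `E(x, A (c² n)) ≤ L ε n E(x, A n)`. As
`ε n → 0`, this factor is eventually at most `(c²)^(-r)`, which forces `E(x, A n) = O(n^(-r))`
for every `x` and every `r > 0`. Conversely, Shapiro's theorem applied to `ε n = (n + 1)^(-r)`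
produces an element outside `A_∞^r`.
-/

open Metric Filter

/-- `(A n)` together with the map `K` is an approximation scheme in `X`. -/
structure IsApproximationScheme {X : Type*} [NormedAddCommGroup X] [NormedSpace ℝ X]
    (A : ℕ → Set X) (K : ℕ → ℕ) : Prop where
  subset_succ : ∀ n, A n ⊆ A (n + 1)
  ne_succ : ∀ n, A n ≠ A (n + 1)
  le_K : ∀ n, n ≤ K n
  add_mem : ∀ n, ∀ x ∈ A n, ∀ y ∈ A n, x + y ∈ A (K n)
  smul_mem : ∀ n (c : ℝ), ∀ x ∈ A n, c • x ∈ A n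
  dense_union : Dense (⋃ n, A n)

/-- `(X, (A n))` satisfies Shapiro's Theorem: for every nonincreasing positive sequence
`ε` converging to `0` there is `x` with `E(x, A n) ≠ O(ε n)`. -/
def SatisfiesShapiro {X : Type*} [NormedAddCommGroup X] (A : ℕ → Set X) : Prop :=
  ∀ ε : ℕ → ℝ, (∀ n, 0 < ε n) → Antitone ε → Tendsto ε atTop (nhds 0) →
    ∃ x : X, ¬ ∃ M : ℝ, ∀ n, infDist x (A n) ≤ M * ε n

/-- `E(B, A) = sup_{b ∈ B} E(b, A)`. -/
noncomputable def setApproxError {X : Type*} [NormedAddCommGroup X] (B A : Set X) : ℝ :=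
  ⨆ b : B, infDist (b : X) A

/-- `dens_n`-style quantity: `E(S(X), A) = sup_{‖x‖ = 1} E(x, A)`. -/
noncomputable def sphDist {X : Type*} [NormedAddCommGroup X] (A : Set X) : ℝ :=
  ⨆ x : {x : X // ‖x‖ = 1}, infDist (x : X) A

open Set Pointwise

theorem exists_closedBall_forall_le_of_forall_bddAbove {X ι : Type*} [PseudoMetricSpace X]
    [BaireSpace X] [Nonempty X] {f : ι → X → ℝ} (hf : ∀ i, Continuous (f i))
    (hbdd : ∀ x, BddAbove (range fun i => f i x)) :
    ∃ x₀, ∃ δ > 0, ∃ B, ∀ z ∈ closedBall x₀ δ, ∀ i, f i z ≤ B := by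
  have hclosed : ∀ j : ℕ, IsClosed {z | ∀ i, f i z ≤ j} := fun j => by
    simp only [ofPred_forall]
    exact isClosed_iInter fun i => isClosed_le (hf i) continuous_const
  have hcover : ⋃ j : ℕ, {z | ∀ i, f i z ≤ j} = univ := by
    refine eq_univ_of_forall fun x => ?_
    obtain ⟨B, hB⟩ := hbdd x
    obtain ⟨j, hj⟩ := exists_nat_ge B
    exact mem_iUnion.2 ⟨j, fun i => (hB ⟨i, rfl⟩).trans hj⟩
  obtain ⟨j, x₀, hx₀⟩ := nonempty_interior_of_iUnion_of_closed hclosed hcover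
  obtain ⟨δ, hδ, hball⟩ := nhds_basis_closedBall.mem_iff.1 (mem_interior_iff_mem_nhds.1 hx₀)
  exact ⟨x₀, δ, hδ, j, fun z hz => hball hz⟩

theorem exists_succ_rpow_mul_le_iff {e : ℕ → ℝ} {r : ℝ} (hr : 0 ≤ r) (he : ∀ n, 0 ≤ e n) :
    (∃ M, ∀ n : ℕ, ((n : ℝ) + 1) ^ r * e n ≤ M) ↔
      ∃ M, ∀ n : ℕ, 1 ≤ n → (n : ℝ) ^ r * e n ≤ M := by
  constructor
  · rintro ⟨M, hM⟩
    refine ⟨M, fun n _ => le_trans ?_ (hM n)⟩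
    gcongr
    · exact he n
    · linarith
  · rintro ⟨M, hM⟩
    refine ⟨max (e 0) (2 ^ r * M), fun n => ?_⟩
    rcases Nat.eq_zero_or_pos n with rfl | hn
    · simp
    have hn' : (1 : ℝ) ≤ n := by exact_mod_cast hn
    calc ((n : ℝ) + 1) ^ r * e n ≤ (2 * n) ^ r * e n := by
          gcongr
          · exact he n
          · linarith
      _ = 2 ^ r * ((n : ℝ) ^ r * e n) := by rw [Real.mul_rpow (by norm_num) (by linarith)]; ring
      _ ≤ 2 ^ r * M := by gcongr; exact hM n hn
      _ ≤ _ := le_max_right _ _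

theorem exists_succ_rpow_mul_le_of_le_rpow_neg_mul {e : ℕ → ℝ} {b m : ℕ} {r : ℝ}
    (hb : 2 ≤ b) (hr : 0 ≤ r) (he0 : ∀ n, 0 ≤ e n) (he : AntitoneOn e (Ici m))
    (hstep : ∀ n, m ≤ n → e (b * n) ≤ (b : ℝ) ^ (-r) * e n) :
    ∃ M, ∀ n : ℕ, ((n : ℝ) + 1) ^ r * e n ≤ M := by
  obtain ⟨M, hM⟩ :=
    ((finite_Iio (b * (m + 1))).image fun n : ℕ => ((n : ℝ) + 1) ^ r * e n).bddAbove
  refine ⟨M, fun n => ?_⟩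
  induction n using Nat.strong_induction_on with
  | _ n ih =>
  rcases lt_or_ge n (b * (m + 1)) with hn | hn
  · exact hM (mem_image_of_mem _ hn)
  set k := n / b
  have hk : m + 1 ≤ k := (Nat.le_div_iff_mul_le (by omega)).2 (by rw [mul_comm]; exact hn)
  have hbk : b * k ≤ n := Nat.mul_div_le n b
  have hnk : n + 1 ≤ b * (k + 1) := Nat.lt_mul_div_succ n (by omega)
  have hb0 : (0 : ℝ) < b := by positivity
  have hen : e n ≤ (b : ℝ) ^ (-r) * e k :=
    (he (show m ≤ b * k by nlinarith) (show m ≤ n by nlinarith) hbk).trans (hstep k (by omega))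
  calc ((n : ℝ) + 1) ^ r * e n ≤ ((b : ℝ) * (k + 1)) ^ r * ((b : ℝ) ^ (-r) * e k) := by
        gcongr
        · exact he0 n
        · exact_mod_cast hnk
    _ = ((k : ℝ) + 1) ^ r * e k := by
        rw [Real.mul_rpow hb0.le (by positivity), Real.rpow_neg hb0.le]
        field_simp
    _ ≤ M := ih k (Nat.div_lt_self ((Nat.mul_pos (by omega) m.succ_pos).trans_le hn) (by omega))

section InfDist

variable {X : Type*} [NormedAddCommGroup X] {S T U : Set X}

theorem infDist_add_le_of_add_subset (hS : S.Nonempty) (hT : T.Nonempty) (h : S + T ⊆ U)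
    (u v : X) : infDist (u + v) U ≤ infDist u S + infDist v T := by
  refine le_of_forall_pos_le_add fun θ hθ => ?_
  obtain ⟨a, ha, hua⟩ := (infDist_lt_iff hS).1 (lt_add_of_pos_right (infDist u S) (half_pos hθ))
  obtain ⟨b, hb, hvb⟩ := (infDist_lt_iff hT).1 (lt_add_of_pos_right (infDist v T) (half_pos hθ))
  calc infDist (u + v) U ≤ dist (u + v) (a + b) := infDist_le_dist_of_mem (h (add_mem_add ha hb))
    _ ≤ dist u a + dist v b := dist_add_add_le u v a b
    _ ≤ _ := by linarith

theorem infDist_le_mul_infDist_of_forall_infDist_le {L : ℝ} (hL : 0 ≤ L) (hS : S.Nonempty)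
    (hST : S ⊆ T) (hTU : T + T ⊆ U) (hbound : ∀ y, infDist y T ≤ L * ‖y‖) (x : X) :
    infDist x U ≤ L * infDist x S := by
  have hT : T.Nonempty := hS.mono hST
  have : Nonempty S := hS.to_subtype
  rw [infDist_eq_iInf (x := x) (s := S), Real.mul_iInf_of_nonneg hL]
  refine le_ciInf fun ⟨a, ha⟩ => ?_
  calc infDist x U = infDist (a + (x - a)) U := by rw [add_sub_cancel]
    _ ≤ infDist a T + infDist (x - a) T := infDist_add_le_of_add_subset hT hT hTU _ _
    _ ≤ 0 + L * ‖x - a‖ := add_le_add (infDist_zero_of_mem (hST ha)).le (hbound _)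
    _ = L * dist x a := by rw [zero_add, dist_eq_norm]

variable [NormedSpace ℝ X]

theorem infDist_smul_of_smul_mem (hS : ∀ (t : ℝ), ∀ y ∈ S, t • y ∈ S) (t : ℝ) (y : X) :
    infDist (t • y) S = |t| * infDist y S := by
  rcases eq_or_ne t 0 with rfl | ht
  · rcases S.eq_empty_or_nonempty with rfl | ⟨s, hs⟩
    · simp
    · simp [infDist_zero_of_mem (by simpa using hS 0 s hs)]
  · have hset : t • S = S := Subset.antisymm (smul_set_subset_iff.2 fun y hy => hS t y hy)
      fun z hz => ⟨t⁻¹ • z, hS _ z hz, smul_inv_smul₀ ht z⟩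
    rw [← Real.norm_eq_abs, ← infDist_smul₀ ht, hset]

theorem le_mul_norm_of_forall_norm_le {f : X → ℝ} (hf : ∀ (t : ℝ) y, f (t • y) = |t| * f y)
    {δ B : ℝ} (hδ : 0 < δ) (hB : ∀ y, ‖y‖ ≤ δ → f y ≤ B) (y : X) : f y ≤ B / δ * ‖y‖ := by
  rcases eq_or_ne y 0 with rfl | hy
  · have h0 := hf 0 0
    simp only [zero_smul, abs_zero, zero_mul] at h0
    simp [h0]
  have hy' : 0 < ‖y‖ := norm_pos_iff.2 hy
  have hscaled := hB ((δ / ‖y‖) • y) (by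
    rw [norm_smul, Real.norm_of_nonneg (by positivity), div_mul_cancel₀ _ hy'.ne'])
  rw [hf, abs_of_pos (by positivity)] at hscaled
  calc f y = ‖y‖ / δ * (δ / ‖y‖ * f y) := by field_simp
    _ ≤ ‖y‖ / δ * B := by gcongr
    _ = B / δ * ‖y‖ := by ring

theorem infDist_le_mul_norm_of_forall_mem_closedBall (hS : S.Nonempty)
    (hSs : ∀ (t : ℝ), ∀ y ∈ S, t • y ∈ S) (hTs : ∀ (t : ℝ), ∀ y ∈ T, t • y ∈ T)
    (hST : S + S ⊆ T) {x₀ : X} {δ B : ℝ} (hδ : 0 < δ)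
    (hB : ∀ z ∈ closedBall x₀ δ, infDist z S ≤ B) (y : X) :
    infDist y T ≤ 2 * B / δ * ‖y‖ := by
  refine le_mul_norm_of_forall_norm_le (f := (infDist · T)) (infDist_smul_of_smul_mem hTs) hδ
    (fun y hy => ?_) y
  have hx₀ : infDist (-x₀) S ≤ B := by
    rw [← neg_one_smul ℝ x₀, infDist_smul_of_smul_mem hSs, abs_neg, abs_one, one_mul]
    exact hB x₀ (mem_closedBall_self hδ.le)
  have hy₀ : infDist (x₀ + y) S ≤ B := hB _ (by simpa [dist_eq_norm] using hy)
  calc infDist y T = infDist ((x₀ + y) + -x₀) T := by rw [add_neg_cancel_comm]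
    _ ≤ infDist (x₀ + y) S + infDist (-x₀) S := infDist_add_le_of_add_subset hS hS hST _ _
    _ ≤ 2 * B := by linarith

end InfDist

/-- The approximation space `A_∞^r`. -/
def approxSpace {X : Type*} [PseudoMetricSpace X] (A : ℕ → Set X) (r : ℝ) : Set X :=
  {x | ∃ M : ℝ, ∀ n : ℕ, ((n : ℝ) + 1) ^ r * infDist x (A n) ≤ M}

theorem exists_unbounded_iff_approxSpace_ne_univ {X : Type*} [PseudoMetricSpace X]
    {A : ℕ → Set X} {r : ℝ} (hr : 0 ≤ r) :
    (∃ x : X, ∀ M : ℝ, ∃ n : ℕ, 1 ≤ n ∧ M < (n : ℝ) ^ r * infDist x (A n)) ↔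
      approxSpace A r ≠ univ := by
  simp only [ne_univ_iff_exists_notMem, approxSpace, mem_ofPred_eq,
    exists_succ_rpow_mul_le_iff hr fun n => infDist_nonneg]
  push Not
  rfl

namespace IsApproximationScheme

variable {X : Type*} [NormedAddCommGroup X] [NormedSpace ℝ X] {A : ℕ → Set X} {K : ℕ → ℕ}

theorem monotone (hA : IsApproximationScheme A K) : Monotone A :=
  monotone_nat_of_le_succ hA.subset_succ

theorem exists_forall_nonempty (hA : IsApproximationScheme A K) :
    ∃ N, ∀ n, N ≤ n → (A n).Nonempty := by
  obtain ⟨a, ha⟩ := hA.dense_union.nonempty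
  obtain ⟨N, hN⟩ := mem_iUnion.1 ha
  exact ⟨N, fun n hn => ⟨a, hA.monotone hn hN⟩⟩

end IsApproximationScheme

theorem SatisfiesShapiro.approxSpace_ne_univ {X : Type*} [NormedAddCommGroup X]
    {A : ℕ → Set X} (h : SatisfiesShapiro A) {r : ℝ} (hr : 0 < r) :
    approxSpace A r ≠ univ := by
  have hanti : Antitone fun n : ℕ => ((n : ℝ) + 1) ^ (-r) := fun a b hab =>
    Real.rpow_le_rpow_of_nonpos (by positivity) (by gcongr) (by linarith)
  have hlim : Tendsto (fun n : ℕ => ((n : ℝ) + 1) ^ (-r)) atTop (nhds 0) :=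
    (tendsto_rpow_neg_atTop hr).comp
      (tendsto_atTop_add_const_right atTop 1 tendsto_natCast_atTop_atTop)
  obtain ⟨x, hx⟩ := h _ (fun n => by positivity) hanti hlim
  refine (ne_univ_iff_exists_notMem _).2 ⟨x, fun ⟨M, hM⟩ => hx ⟨M, fun n => ?_⟩⟩
  rw [Real.rpow_neg (by positivity), ← div_eq_mul_inv, le_div_iff₀ (by positivity), mul_comm]
  exact hM n

theorem SatisfiesShapiro.of_approxSpace_ne_univ {X : Type*} [NormedAddCommGroup X]
    [NormedSpace ℝ X] [CompleteSpace X] {A : ℕ → Set X} {K : ℕ → ℕ}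
    (hA : IsApproximationScheme A K) {c : ℕ} (hc : 2 ≤ c)
    (hadd : ∀ n : ℕ, 1 ≤ n → ∀ x ∈ A n, ∀ y ∈ A n, x + y ∈ A (c * n))
    {r : ℝ} (hr : 0 < r) (hne : approxSpace A r ≠ univ) : SatisfiesShapiro A := by
  intro ε hε hanti hlim
  by_contra! hO
  refine hne (eq_univ_of_forall fun x => ?_)
  have hbdd : ∀ y, BddAbove (range fun n => infDist y (A n) / ε n) := fun y => by
    obtain ⟨M, hM⟩ := hO y
    exact ⟨M, forall_mem_range.2 fun n => (div_le_iff₀ (hε n)).2 (hM n)⟩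
  obtain ⟨x₀, δ, hδ, B, hB⟩ := exists_closedBall_forall_le_of_forall_bddAbove
    (fun n => (continuous_infDist_pt (A n)).div_const (ε n)) hbdd
  have hB0 : 0 ≤ B :=
    (div_nonneg infDist_nonneg (hε 0).le).trans (hB x₀ (mem_closedBall_self hδ.le) 0)
  obtain ⟨N, hN⟩ := hA.exists_forall_nonempty
  have hcontract : ∀ n, max N 1 ≤ n →
      infDist x (A (c ^ 2 * n)) ≤ 2 * (B * ε n) / δ * infDist x (A n) := by
    intro n hn
    have hn1 : 1 ≤ n := le_of_max_le_right hn
    have hcn : n ≤ c * n := Nat.le_mul_of_pos_left n (by omega)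
    have hbound := infDist_le_mul_norm_of_forall_mem_closedBall (hN n (le_of_max_le_left hn))
      (hA.smul_mem n) (hA.smul_mem (c * n)) (add_subset_iff.2 (hadd n hn1)) hδ
      fun z hz => (div_le_iff₀ (hε n)).1 (hB z hz n)
    rw [sq, mul_assoc]
    exact infDist_le_mul_infDist_of_forall_infDist_le (by have := (hε n).le; positivity)
      (hN n (le_of_max_le_left hn)) (hA.monotone hcn)
      (add_subset_iff.2 (hadd (c * n) (hn1.trans hcn))) hbound x
  have hsmall : ∀ᶠ n in atTop, 2 * (B * ε n) / δ ≤ ((c ^ 2 : ℕ) : ℝ) ^ (-r) := by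
    have hlim' : Tendsto (fun n => 2 * (B * ε n) / δ) atTop (nhds 0) := by
      simpa using ((hlim.const_mul B).const_mul 2).div_const δ
    exact (hlim'.eventually_lt_const (by positivity)).mono fun n => le_of_lt
  obtain ⟨m, hm⟩ := eventually_atTop.1 (hsmall.and (eventually_ge_atTop (max N 1)))
  refine exists_succ_rpow_mul_le_of_le_rpow_neg_mul (b := c ^ 2) (m := m) (by nlinarith) hr.le
    (fun n => infDist_nonneg) ?_ fun n hn => ?_
  · exact fun a ha b _ hab => infDist_le_infDist_of_subset (hA.monotone hab)
      (hN a (le_of_max_le_left ((hm m le_rfl).2.trans ha)))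
  · exact (hcontract n (hm n hn).2).trans
      (mul_le_mul_of_nonneg_right (hm n hn).1 infDist_nonneg)

theorem stmt15_general {X : Type*} [NormedAddCommGroup X] [NormedSpace ℝ X] [CompleteSpace X]
    (A : ℕ → Set X) (K : ℕ → ℕ)
    (hA : IsApproximationScheme A K) (c : ℕ) (hc : 2 ≤ c)
    (hadd : ∀ n : ℕ, 1 ≤ n → ∀ x ∈ A n, ∀ y ∈ A n, x + y ∈ A (c * n)) :
    (SatisfiesShapiro A ↔
      ∀ r : ℝ, 0 < r → ∃ x : X, ∀ M : ℝ, ∃ n : ℕ, 1 ≤ n ∧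
        M < (n : ℝ) ^ r * infDist x (A n)) ∧
    (SatisfiesShapiro A ↔
      ∃ r : ℝ, 0 < r ∧ ∃ x : X, ∀ M : ℝ, ∃ n : ℕ, 1 ≤ n ∧
        M < (n : ℝ) ^ r * infDist x (A n)) ∧
    (SatisfiesShapiro A ↔
      ∀ r : ℝ, 0 < r →
        {x : X | ∃ M : ℝ, ∀ n : ℕ, ((n : ℝ) + 1) ^ r * infDist x (A n) ≤ M} ≠ Set.univ) ∧
    (SatisfiesShapiro A ↔
      ∃ r : ℝ, 0 < r ∧
        {x : X | ∃ M : ℝ, ∀ n : ℕ, ((n : ℝ) + 1) ^ r * infDist x (A n) ≤ M} ≠ Set.univ) := by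
  have hall : SatisfiesShapiro A ↔ ∀ r : ℝ, 0 < r → approxSpace A r ≠ univ :=
    ⟨fun h r hr => h.approxSpace_ne_univ hr,
      fun h => .of_approxSpace_ne_univ hA hc hadd one_pos (h 1 one_pos)⟩
  have hex : SatisfiesShapiro A ↔ ∃ r : ℝ, 0 < r ∧ approxSpace A r ≠ univ :=
    ⟨fun h => ⟨1, one_pos, h.approxSpace_ne_univ one_pos⟩,
      fun ⟨r, hr, h⟩ => .of_approxSpace_ne_univ hA hc hadd hr h⟩
  refine ⟨?_, ?_, hall, hex⟩
  · rw [hall]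
    exact forall₂_congr fun r hr => (exists_unbounded_iff_approxSpace_ne_univ hr.le).symm
  · rw [hex]
    exact exists_congr fun r => and_congr_right fun hr =>
      (exists_unbounded_iff_approxSpace_ne_univ hr.le).symm

theorem stmt15 {X : Type*} [NormedAddCommGroup X] [NormedSpace ℝ X] [CompleteSpace X]
    (hX : ¬ FiniteDimensional ℝ X) (A : ℕ → Set X) (K : ℕ → ℕ)
    (hA : IsApproximationScheme A K) (c : ℕ) (hc : 2 ≤ c)
    (hadd : ∀ n : ℕ, 1 ≤ n → ∀ x ∈ A n, ∀ y ∈ A n, x + y ∈ A (c * n)) :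
    (SatisfiesShapiro A ↔
      ∀ r : ℝ, 0 < r → ∃ x : X, ∀ M : ℝ, ∃ n : ℕ, 1 ≤ n ∧
        M < (n : ℝ) ^ r * infDist x (A n)) ∧
    (SatisfiesShapiro A ↔
      ∃ r : ℝ, 0 < r ∧ ∃ x : X, ∀ M : ℝ, ∃ n : ℕ, 1 ≤ n ∧
        M < (n : ℝ) ^ r * infDist x (A n)) ∧
    (SatisfiesShapiro A ↔
      ∀ r : ℝ, 0 < r →
        {x : X | ∃ M : ℝ, ∀ n : ℕ, ((n : ℝ) + 1) ^ r * infDist x (A n) ≤ M} ≠ Set.univ) ∧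
    (SatisfiesShapiro A ↔
      ∃ r : ℝ, 0 < r ∧
        {x : X | ∃ M : ℝ, ∀ n : ℕ, ((n : ℝ) + 1) ^ r * infDist x (A n) ≤ M} ≠ Set.univ) :=
  stmt15_general A K hA c hc hadd
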